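/- arXiv:1407.5224 — 10 statements merged into one kernel-verified Lean document; each statement's English description precedes it below -/
import Mathlib

section
/- Let H be an abelian group and B a left brace. Let σ : (B,·) → Aut(H,+) be an injective group homomorphism and h : (H,+) → (B,+) a surjective group homomorphism such that h(σ(g)(m)) = λ_g(h(m)) for all g ∈ B and m ∈ H. Then the operation x·y := x + σ(h(x))(y) is a group operation on H (with neutral element 0 and inverse of x given by −σ(h(x)⁻¹)(x)) and together with + it makes H a left brace. -/
/-!
The compatibility condition says exactly that `h` turns the new product into the product of `B`:
`h (x + σ(h x) y) = h x + λ_{h x}(h y) = h x * h y`. Associativity and the inverse formula then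
follow from `σ` being a homomorphism, and the brace identity holds because each `σ(h a)` is additive.
-/

class LeftBrace (B : Type*) extends AddCommGroup B, Group B where
  left_brace : ∀ a b c : B, a * (b + c) + a = a * b + a * c

lemma LeftBrace.zero_eq_one (B : Type*) [LeftBrace B] : (0 : B) = 1 := by
  have := LeftBrace.left_brace (1 : B) 0 0
  simp only [add_zero, one_mul] at this
  linear_combination (norm := abel) -this

section SigmaProduct

variable {H B : Type*} [AddCommGroup H] [LeftBrace B]

def sigmaMul (σ : B →* Multiplicative (AddAut H)) (h : H →+ B) (x y : H) : H :=
  x + Multiplicative.toAdd (σ (h x)) y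

def sigmaInv (σ : B →* Multiplicative (AddAut H)) (h : H →+ B) (x : H) : H :=
  -(Multiplicative.toAdd (σ ((h x)⁻¹)) x)

/-- `h ∘ σ(g) = λ_g ∘ h`. -/
def SigmaCompatible (σ : B →* Multiplicative (AddAut H)) (h : H →+ B) : Prop :=
  ∀ (g : B) (m : H), h (Multiplicative.toAdd (σ g) m) = g * h m - g

variable (σ : B →* Multiplicative (AddAut H)) (h : H →+ B)

lemma sigmaMul_add_add (a b c : H) :
    sigmaMul σ h a (b + c) + a = sigmaMul σ h a b + sigmaMul σ h a c := by
  simp only [sigmaMul, map_add]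
  abel

lemma sigmaMul_zero (x : H) : sigmaMul σ h x 0 = x := by
  simp [sigmaMul]

lemma zero_sigmaMul (x : H) : sigmaMul σ h 0 x = x := by
  rw [sigmaMul, map_zero, LeftBrace.zero_eq_one B, map_one]
  simp

lemma sigmaMul_sigmaInv (x : H) : sigmaMul σ h x (sigmaInv σ h x) = 0 := by
  rw [sigmaMul, sigmaInv, map_neg, ← AddAut.add_apply, ← toAdd_mul, ← map_mul, mul_inv_cancel,
    map_one]
  simp

variable {σ h}

lemma SigmaCompatible.map_sigmaMul (compat : SigmaCompatible σ h) (x y : H) :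
    h (sigmaMul σ h x y) = h x * h y := by
  rw [sigmaMul, map_add, compat]
  abel

lemma SigmaCompatible.sigmaMul_assoc (compat : SigmaCompatible σ h) (x y z : H) :
    sigmaMul σ h (sigmaMul σ h x y) z = sigmaMul σ h x (sigmaMul σ h y z) := by
  rw [sigmaMul, compat.map_sigmaMul, map_mul]
  simp [sigmaMul, add_assoc]

lemma SigmaCompatible.map_sigmaInv (compat : SigmaCompatible σ h) (x : H) :
    h (sigmaInv σ h x) = (h x)⁻¹ := by
  rw [sigmaInv, map_neg, compat, inv_mul_cancel, ← LeftBrace.zero_eq_one B]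
  abel

lemma SigmaCompatible.sigmaInv_sigmaMul (compat : SigmaCompatible σ h) (x : H) :
    sigmaMul σ h (sigmaInv σ h x) x = 0 := by
  rw [sigmaMul, compat.map_sigmaInv, sigmaInv]
  abel

end SigmaProduct

theorem brace_structure_from_sigma_h_general (H : Type*) [AddCommGroup H] (B : Type*) [LeftBrace B]
    (σ : B →* Multiplicative (AddAut H))
    (h : H →+ B)
    (compat : ∀ (g : B) (m : H), h (Multiplicative.toAdd (σ g) m) = g * h m - g) :
    ∀ mul : H → H → H, (∀ x y : H, mul x y = x + Multiplicative.toAdd (σ (h x)) y) →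
      (∀ x y z : H, mul (mul x y) z = mul x (mul y z)) ∧
      (∀ x : H, mul 0 x = x ∧ mul x 0 = x) ∧
      (∀ x : H, mul (-(Multiplicative.toAdd (σ ((h x)⁻¹)) x)) x = 0 ∧ mul x (-(Multiplicative.toAdd (σ ((h x)⁻¹)) x)) = 0) ∧
      (∀ a b c : H, mul a (b + c) + a = mul a b + mul a c) := by
  intro mul hmul
  obtain rfl : mul = sigmaMul σ h := funext₂ hmul
  have compat : SigmaCompatible σ h := compat
  exact ⟨compat.sigmaMul_assoc, fun x ↦ ⟨zero_sigmaMul σ h x, sigmaMul_zero σ h x⟩,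
    fun x ↦ ⟨compat.sigmaInv_sigmaMul x, sigmaMul_sigmaInv σ h x⟩, sigmaMul_add_add σ h⟩

/-- Given an abelian group `H`, a left brace `B`, an injective group homomorphism
`σ : (B,·) → Aut(H,+)` and a surjective additive homomorphism `h : (H,+) → (B,+)` with
`h(σ(g)(m)) = λ_g(h(m))`, the operation `x·y := x + σ(h(x))(y)` is a group operation on `H`
(with neutral element `0` and inverse of `x` equal to `−σ(h(x)⁻¹)(x)`) making `H`,
together with `+`, a left brace. -/
theorem brace_structure_from_sigma_h (H : Type*) [AddCommGroup H] (B : Type*) [LeftBrace B]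
    (σ : B →* Multiplicative (AddAut H)) (hσ : Function.Injective σ)
    (h : H →+ B) (hh : Function.Surjective h)
    (compat : ∀ (g : B) (m : H), h (Multiplicative.toAdd (σ g) m) = g * h m - g) :
    ∀ mul : H → H → H, (∀ x y : H, mul x y = x + Multiplicative.toAdd (σ (h x)) y) →
      (∀ x y z : H, mul (mul x y) z = mul x (mul y z)) ∧
      (∀ x : H, mul 0 x = x ∧ mul x 0 = x) ∧
      (∀ x : H, mul (-(Multiplicative.toAdd (σ ((h x)⁻¹)) x)) x = 0 ∧ mul x (-(Multiplicative.toAdd (σ ((h x)⁻¹)) x)) = 0) ∧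
      (∀ a b c : H, mul a (b + c) + a = mul a b + mul a c) :=
  brace_structure_from_sigma_h_general H B σ h compat
end

section
/- Let H be an abelian group and B a left brace. Let σ : (B,·) → Aut(H,+) be an injective group homomorphism and h : (H,+) → (B,+) a surjective group homomorphism such that h(σ(g)(m)) = λ_g(h(m)) for all g ∈ B and m ∈ H. Equip H with the left brace structure x·y := x + σ(h(x))(y). Then in this left brace λ_x = σ(h(x)) for all x ∈ H, the socle of H equals the kernel of h, and h satisfies h(x·y) = h(x)·h(y) for all x,y ∈ H, i.e. h is a homomorphism of left braces. -/
namespace LeftBrace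

variable {B : Type*} [LeftBrace B]

theorem zero_eq_one_s2 : (0 : B) = 1 := by
  simpa using (left_brace (1 : B) 0 0).symm

theorem forall_toAdd_apply_eq_self_iff {H : Type*} [Add H] {σ : B →* Multiplicative (AddAut H)}
    (hσ : Function.Injective σ) {g : B} : (∀ y, (σ g).toAdd y = y) ↔ g = 0 := by
  rw [zero_eq_one_s2, ← map_eq_one_iff σ hσ]
  constructor
  · intro hg
    apply Multiplicative.toAdd.injective
    ext y
    exact hg y
  · rintro hg y
    rw [hg]
    rfl

end LeftBrace

theorem lambda_socle_and_h_brace_hom_general (H : Type*) [AddCommGroup H] (B : Type*) [LeftBrace B]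
    (σ : B →* Multiplicative (AddAut H)) (hσ : Function.Injective σ)
    (h : H →+ B)
    (compat : ∀ (g : B) (m : H), h ((σ g).toAdd m) = g * h m - g) :
    ∀ mul : H → H → H, (∀ x y : H, mul x y = x + (σ (h x)).toAdd y) →
      (∀ x y : H, mul x y - x = (σ (h x)).toAdd y) ∧
      (∀ x : H, (∀ y : H, mul x y - x = y) ↔ h x = 0) ∧
      (∀ x y : H, h (mul x y) = h x * h y) := by
  intro mul hmul
  have lambda_eq : ∀ x y, mul x y - x = (σ (h x)).toAdd y := fun x y => by
    rw [hmul, add_sub_cancel_left]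
  refine ⟨lambda_eq, fun x => ?_, fun x y => ?_⟩
  · simp only [lambda_eq]
    exact LeftBrace.forall_toAdd_apply_eq_self_iff hσ
  · rw [hmul, map_add, compat, add_sub_cancel]

/-- With the left brace structure `x·y := x + σ(h(x))(y)` on `H`: the lambda maps of `H`
satisfy `λ_x = σ(h(x))`, the socle of `H` equals `ker h`, and `h` is multiplicative,
hence a homomorphism of left braces. -/
theorem lambda_socle_and_h_brace_hom (H : Type*) [AddCommGroup H] (B : Type*) [LeftBrace B]
    (σ : B →* Multiplicative (AddAut H)) (hσ : Function.Injective σ)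
    (h : H →+ B) (hh : Function.Surjective h)
    (compat : ∀ (g : B) (m : H), h ((σ g).toAdd m) = g * h m - g) :
    ∀ mul : H → H → H, (∀ x y : H, mul x y = x + (σ (h x)).toAdd y) →
      (∀ x y : H, mul x y - x = (σ (h x)).toAdd y) ∧
      (∀ x : H, (∀ y : H, mul x y - x = y) ↔ h x = 0) ∧
      (∀ x y : H, h (mul x y) = h x * h y) :=
  lambda_socle_and_h_brace_hom_general H B σ hσ h compat
end

section
/- Let H be an abelian group and B a left brace, and let (σ,h) and (σ',h') be two pairs, each consisting of an injective group homomorphism σ : (B,·) → Aut(H,+) (resp. σ') and a surjective group homomorphism h : (H,+) → (B,+) (resp. h') satisfying h(σ(g)(m)) = λ_g(h(m)) for all g ∈ B, m ∈ H (resp. the same for σ',h'). Then the left braces (H, +, x·y := x + σ(h(x))(y)) and (H, +, x⊙y := x + σ'(h'(x))(y)) are isomorphic if and only if there exists F ∈ Aut(H,+) such that σ'(h'(m)) = F⁻¹ ∘ σ(h(F(m))) ∘ F for all m ∈ H. -/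
/-- The multiplicative group structure on `AddAut A` (composition), as in the older Mathlib,
where `AddAut A` was a `Group` rather than an `AddGroup`. -/
instance AddAut.group (A : Type*) [Add A] : Group (AddAut A) where
  mul g h := AddEquiv.trans h g
  one := AddEquiv.refl _
  inv := AddEquiv.symm
  mul_assoc _ _ _ := rfl
  one_mul _ := rfl
  mul_one _ := rfl
  inv_mul_cancel := AddEquiv.self_trans_symm

namespace AddAut

theorem eq_inv_mul_mul_iff {H : Type*} [Add H] (F a b : AddAut H) :
    a = F⁻¹ * b * F ↔ ∀ y, F (a y) = b (F y) := by
  rw [mul_assoc, eq_inv_mul_iff_mul_eq]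
  exact AddEquiv.ext_iff

theorem map_add_apply_iff_forall_eq_inv_mul_mul {H : Type*} [AddGroup H] (F : AddAut H)
    (φ ψ : H → AddAut H) :
    (∀ x y, F (x + ψ x y) = F x + φ (F x) (F y)) ↔ ∀ x, ψ x = F⁻¹ * φ (F x) * F := by
  simp only [map_add, add_right_inj, eq_inv_mul_mul_iff]

end AddAut

theorem brace_structures_isomorphic_iff_general (H : Type*) [AddCommGroup H] (B : Type*) [LeftBrace B]
    (σ σ' : B →* AddAut H)
    (h h' : H →+ B) :
    (∃ F : H ≃+ H, ∀ x y : H, F (x + σ' (h' x) y) = F x + σ (h (F x)) (F y)) ↔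
    (∃ F : AddAut H, ∀ m : H, σ' (h' m) = F⁻¹ * σ (h (F m)) * F) :=
  exists_congr fun F =>
    AddAut.map_add_apply_iff_forall_eq_inv_mul_mul F (fun x => σ (h x)) (fun x => σ' (h' x))

/-- Given two pairs `(σ,h)` and `(σ',h')` as in Theorem BenDavid, the corresponding left
braces `(H,+,·)` with `x·y = x + σ(h(x))(y)` and `(H,+,⊙)` with `x⊙y = x + σ'(h'(x))(y)`
are isomorphic iff there is `F ∈ Aut(H,+)` with `σ'(h'(m)) = F⁻¹ ∘ σ(h(F(m))) ∘ F` for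
all `m`. -/
theorem brace_structures_isomorphic_iff (H : Type*) [AddCommGroup H] (B : Type*) [LeftBrace B]
    (σ σ' : B →* AddAut H) (hσ : Function.Injective σ) (hσ' : Function.Injective σ')
    (h h' : H →+ B) (hh : Function.Surjective h) (hh' : Function.Surjective h')
    (compat : ∀ (g : B) (m : H), h (σ g m) = g * h m - g)
    (compat' : ∀ (g : B) (m : H), h' (σ' g m) = g * h' m - g) :
    (∃ F : H ≃+ H, ∀ x y : H, F (x + σ' (h' x) y) = F x + σ (h (F x)) (F y)) ↔
    (∃ F : AddAut H, ∀ m : H, σ' (h' m) = F⁻¹ * σ (h (F m)) * F) :=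
  brace_structures_isomorphic_iff_general H B σ σ' h h'
end

section
/- Let p be a prime. Every left brace whose additive group is isomorphic to Z/(p²) is isomorphic to exactly one of the following two left braces on Z/(p²): (i) the trivial brace x·y = x+y; (ii) the brace with multiplication x·y = x + y + p·x·y (product taken in the ring Z/(p²)). Moreover these two left braces are not isomorphic. -/
lemma aux_padic (p : ℕ) (hp : p.Prime) (x : ZMod (p ^ 2))
    (hx : x ^ p ^ 2 = 1) : ∃ t : ZMod (p ^ 2), x = 1 + (p : ZMod (p ^ 2)) * t := by
  haveI : Fact p.Prime := ⟨hp⟩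
  haveI : NeZero (p ^ 2) := ⟨pow_ne_zero 2 hp.pos.ne'⟩
  set π := ZMod.castHom (dvd_pow_self p two_ne_zero) (ZMod p) with hπ
  have h1 : π x = 1 := by
    have h := congrArg π hx
    rw [map_pow, map_one] at h
    have hc : π x ^ p = π x := ZMod.pow_card _
    have h2 : π x ^ p ^ 2 = π x := by
      have e : π x ^ p ^ 2 = (π x ^ p) ^ p := by rw [← pow_mul, ← pow_two]
      rw [e, hc, hc]
    exact h2.symm.trans h
  have hv : (((x - 1).val : ℕ) : ZMod (p ^ 2)) = x - 1 := ZMod.natCast_zmod_val _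
  have h2 : ((((x - 1).val : ℕ)) : ZMod p) = 0 := by
    rw [← map_natCast π, hv, map_sub, map_one, h1, sub_self]
  obtain ⟨m, hm⟩ := (ZMod.natCast_eq_zero_iff _ _).mp h2
  refine ⟨m, ?_⟩
  have h3 : x - 1 = (p : ZMod (p ^ 2)) * m := by
    rw [← hv, hm]; push_cast; ring
  linear_combination h3

lemma aux_unit (p : ℕ) (hp : p.Prime) (t : ZMod (p ^ 2))
    (ht : (p : ZMod (p ^ 2)) * t ≠ 0) : IsUnit t := by
  haveI : NeZero (p ^ 2) := ⟨pow_ne_zero 2 hp.pos.ne'⟩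
  have hv : ((t.val : ℕ) : ZMod (p ^ 2)) = t := ZMod.natCast_zmod_val _
  by_cases hd : p ∣ t.val
  · obtain ⟨m, hm⟩ := hd
    exfalso
    apply ht
    have h : t = (p : ZMod (p ^ 2)) * m := by rw [← hv, hm]; push_cast; ring
    rw [h, ← mul_assoc, ← Nat.cast_mul, ← pow_two, ZMod.natCast_self, zero_mul]
  · rw [← hv, ZMod.isUnit_iff_coprime]
    exact Nat.Coprime.pow_right 2 ((Nat.Prime.coprime_iff_not_dvd hp).mpr hd).symm

/-- The "weight" of an element of a left brace relative to an additive isomorphism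
with `ZMod n`. -/
def braceU {B : Type*} [LeftBrace B] {n : ℕ} (φ : B ≃+ ZMod n) (a : B) : ZMod n :=
  φ (a * φ.symm 1) - φ a

/-- Every left brace with additive group isomorphic to `Z/(p²)` is isomorphic to exactly
one of: (i) the trivial brace `x·y = x+y`; (ii) the brace `x·y = x+y+p·x·y` on `Z/(p²)`;
moreover these two braces are not isomorphic. -/
theorem braces_of_order_p_squared_cyclic (p : ℕ) (hp : p.Prime) :
    (∀ (B : Type*) [LeftBrace B], (B ≃+ ZMod (p ^ 2)) →
      (∃ e : B ≃+ ZMod (p ^ 2), ∀ x y : B, e (x * y) = e x + e y) ∨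
      (∃ e : B ≃+ ZMod (p ^ 2), ∀ x y : B,
        e (x * y) = e x + e y + (p : ZMod (p ^ 2)) * e x * e y)) ∧
    ¬∃ f : ZMod (p ^ 2) ≃+ ZMod (p ^ 2), ∀ x y : ZMod (p ^ 2),
      f (x + y) = f x + f y + (p : ZMod (p ^ 2)) * f x * f y := by
  haveI : Fact p.Prime := ⟨hp⟩
  haveI : NeZero (p ^ 2) := ⟨pow_ne_zero 2 hp.pos.ne'⟩
  constructor
  · intro B _ φ
    -- basic brace identities
    have hlam : ∀ a b c : B, a * (b + c) = a * b + a * c - a := by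
      intro a b c
      exact eq_sub_of_add_eq (LeftBrace.left_brace a b c)
    have h0 : ∀ a : B, a * 0 = a := by
      intro a
      have h := LeftBrace.left_brace a 0 0
      rw [add_zero] at h
      exact (add_left_cancel h).symm
    have hone : (1 : B) = 0 := by
      have h1 := h0 1
      rw [one_mul] at h1
      exact h1.symm
    -- cardinality
    have hcard : Nat.card B = p ^ 2 := by
      rw [Nat.card_congr φ.toEquiv, Nat.card_zmod]
    -- commutativity
    have hcomm : ∀ a b : B, a * b = b * a :=
      IsPGroup.commutative_of_card_eq_prime_sq hcard
    -- the lambda maps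
    have hu_def : ∀ a : B, braceU φ a = φ (a * φ.symm 1) - φ a := fun _ => rfl
    set u : B → ZMod (p ^ 2) := braceU φ with hu
    have hu0 : u 0 = 1 := by
      rw [hu_def]
      have h01 : (0 : B) * φ.symm 1 = φ.symm 1 := by rw [← hone, one_mul]
      rw [h01, map_zero, sub_zero, AddEquiv.apply_symm_apply]
    have hmul : ∀ a b : B, φ (a * b) = φ a + u a * φ b := by
      intro a b
      let F : ZMod (p ^ 2) →+ ZMod (p ^ 2) :=
        AddMonoidHom.mk' (fun c => φ (a * φ.symm c) - φ a) (by
          intro c d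
          show φ (a * φ.symm (c + d)) - φ a
              = (φ (a * φ.symm c) - φ a) + (φ (a * φ.symm d) - φ a)
          have h := hlam a (φ.symm c) (φ.symm d)
          rw [← map_add φ.symm] at h
          rw [h]
          simp only [map_sub, map_add]
          abel)
      have hF : ∀ c : ZMod (p ^ 2), F c = c * F 1 := by
        intro c
        have hk : ∀ k : ℕ, F (k : ZMod (p ^ 2)) = (k : ZMod (p ^ 2)) * F 1 := by
          intro k
          have hone' : ((k : ZMod (p ^ 2))) = k • (1 : ZMod (p ^ 2)) := by
            simp [nsmul_eq_mul]
          rw [hone', map_nsmul, nsmul_eq_mul, hone']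
        have h := hk c.val
        rwa [ZMod.natCast_zmod_val] at h
      have hFb := hF (φ b)
      have hF1 : F 1 = u a := rfl
      have hFb' : F (φ b) = φ (a * b) - φ a := by
        show φ (a * φ.symm (φ b)) - φ a = φ (a * b) - φ a
        rw [AddEquiv.symm_apply_apply]
      rw [hFb', hF1] at hFb
      linear_combination hFb
    -- u is multiplicative
    have hhom : ∀ a b : B, u (a * b) = u a * u b := by
      intro a b
      have h1 : φ ((a * b) * φ.symm 1) = φ (a * b) + u (a * b) * 1 := by
        have h := hmul (a * b) (φ.symm 1)
        rwa [AddEquiv.apply_symm_apply] at h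
      have h2 : φ (a * (b * φ.symm 1)) = φ (a * b) + u a * u b * 1 := by
        rw [hmul a (b * φ.symm 1), hmul b (φ.symm 1), AddEquiv.apply_symm_apply,
          hmul a b]
        ring
      rw [← mul_assoc] at h2
      rw [h1] at h2
      simpa using h2
    have hpow : ∀ (n : ℕ) (a : B), u (a ^ n) = u a ^ n := by
      intro n a
      induction n with
      | zero => rw [pow_zero, pow_zero, hone, hu0]
      | succ n ih =>
        rw [pow_succ a n, hhom, ih]
        exact (pow_succ (u a) n).symm
    -- u a = 1 + p * (something)
    have hua : ∀ a : B, ∃ t : ZMod (p ^ 2), u a = 1 + (p : ZMod (p ^ 2)) * t := by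
      intro a
      apply aux_padic p hp
      rw [← hpow]
      have hA : a ^ p ^ 2 = 1 := by
        rw [← hcard]; exact pow_card_eq_one'
      rw [hA, hone, hu0]
    -- commutativity gives linearity
    have hlin : ∀ a b : B, (u a - 1) * φ b = (u b - 1) * φ a := by
      intro a b
      have h1 := hmul a b
      have h2 := hmul b a
      rw [hcomm a b, h2] at h1
      linear_combination -h1
    obtain ⟨t, ht⟩ := hua (φ.symm 1)
    have hls : ∀ a : B, u a = 1 + (p : ZMod (p ^ 2)) * t * φ a := by
      intro a
      have h := hlin a (φ.symm 1)
      rw [AddEquiv.apply_symm_apply, mul_one, ht] at h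
      linear_combination h
    have hmul' : ∀ a b : B,
        φ (a * b) = φ a + φ b + (p : ZMod (p ^ 2)) * t * φ a * φ b := by
      intro a b
      rw [hmul a b, hls a]
      ring
    by_cases hz : (p : ZMod (p ^ 2)) * t = 0
    · left
      exact ⟨φ, fun x y => by rw [hmul' x y, hz]; ring⟩
    · right
      obtain ⟨v, hv⟩ := aux_unit p hp t hz
      refine ⟨φ.trans
        { toFun := fun x => t * x
          invFun := fun x => (↑v⁻¹ : ZMod (p ^ 2)) * x
          left_inv := fun x => by
            show (↑v⁻¹ : ZMod (p ^ 2)) * (t * x) = x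
            rw [← mul_assoc, ← hv, Units.inv_mul, one_mul]
          right_inv := fun x => by
            show t * ((↑v⁻¹ : ZMod (p ^ 2)) * x) = x
            rw [← mul_assoc, ← hv, Units.mul_inv, one_mul]
          map_add' := fun x y => mul_add t x y }, fun x y => ?_⟩
      show t * φ (x * y) = t * φ x + t * φ y + (p : ZMod (p ^ 2)) * (t * φ x) * (t * φ y)
      rw [hmul' x y]
      ring
  · rintro ⟨f, hf⟩
    have h : ∀ x y : ZMod (p ^ 2), (p : ZMod (p ^ 2)) * f x * f y = 0 := by
      intro x y
      have hxy := hf x y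
      rw [map_add] at hxy
      linear_combination -hxy
    obtain ⟨x, hx⟩ := f.surjective 1
    have hxx := h x x
    rw [hx, mul_one, mul_one] at hxx
    have hne : (p : ZMod (p ^ 2)) ≠ 0 := by
      rw [Ne, ZMod.natCast_eq_zero_iff]
      intro hd
      have := Nat.le_of_dvd hp.pos hd
      nlinarith [hp.two_le]
    exact hne hxx
end

section
/- Let p be a prime. Every left brace whose additive group is isomorphic to Z/(p) × Z/(p) is isomorphic to exactly one of the following two left braces on Z/(p) × Z/(p): (i) the trivial brace (x₁,y₁)·(x₂,y₂) = (x₁+x₂, y₁+y₂); (ii) the brace with multiplication (x₁,y₁)·(x₂,y₂) = (x₁+x₂+y₁y₂, y₁+y₂). Moreover these two left braces are not isomorphic. -/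
/-!
The maps `λ_a b = -a + a * b` of a left brace `B` are additive endomorphisms, and `a ↦ λ_a` is a
homomorphism from the multiplicative group. If `B ≃+ (ZMod p)²`, the multiplicative group is a
`p`-group, so it fixes some `w ≠ 0` under `λ`; in coordinates with `w ↦ (1, 0)` every `λ_a` is
unitriangular, because its second diagonal entry is a character of a `p`-group into `ZMod p`.
Thus `a * b = a + b + c(a) b₂ w`, and since a group of order `p²` is abelian, `c(a) = μ a₂`.
Rescaling the first coordinate by `μ⁻¹` gives the model brace when `μ ≠ 0`, and `μ = 0` is the
trivial brace. The two differ since the model's `x * x ≠ x + x` at `x = (0, 1)`.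
-/

theorem IsPGroup.exists_ne_zero_forall_apply_eq {p : ℕ} [Fact p.Prime] {G V : Type*} [Group G]
    [AddMonoid V] [Finite V] (hG : IsPGroup p G) (hV : p ∣ Nat.card V)
    (ρ : G →* AddMonoid.End V) : ∃ w ≠ 0, ∀ g, ρ g w = w := by
  let := MulAction.compHom V ρ
  obtain ⟨w, hw, hw0⟩ := hG.exists_fixed_point_of_prime_dvd_card_of_fixed_point V hV
    (a := 0) fun g => map_zero (ρ g)
  exact ⟨w, hw0.symm, hw⟩

theorem ZMod.map_prod_eq_smul_add_smul {n : ℕ} {M F : Type*} [AddCommGroup M]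
    [Module (ZMod n) M] [FunLike F (ZMod n × ZMod n) M] [AddMonoidHomClass F (ZMod n × ZMod n) M]
    (f : F) (v : ZMod n × ZMod n) : f v = v.1 • f (1, 0) + v.2 • f (0, 1) := by
  rw [← ZMod.map_smul, ← ZMod.map_smul, ← map_add]
  congr 1
  ext <;> simp

theorem IsPGroup.exists_forall_apply_eq_add_mul_snd {p : ℕ} [Fact p.Prime] {G : Type*} [Group G]
    (hG : IsPGroup p G) (ρ : G →* AddMonoid.End (ZMod p × ZMod p))
    (hρ : ∀ g, ρ g (1, 0) = (1, 0)) :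
    ∃ c : G → ZMod p, ∀ g v, ρ g v = (v.1 + v.2 * c g, v.2) := by
  have coords : ∀ g v, ρ g v = (v.1 + v.2 * (ρ g (0, 1)).1, v.2 * (ρ g (0, 1)).2) := by
    intro g v
    rw [ZMod.map_prod_eq_smul_add_smul (ρ g) v, hρ]
    ext <;> simp
  let d : G →* ZMod p :=
    { toFun g := (ρ g (0, 1)).2
      map_one' := by simp
      map_mul' g h := by
        rw [map_mul, AddMonoid.End.coe_mul, Function.comp_apply, coords g]
        simp [mul_comm] }
  have hd : ∀ g, d g = 1 := fun g => by
    obtain ⟨k, hk⟩ := hG g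
    rw [← ZMod.pow_card_pow (d g) (n := k), ← map_pow, hk, map_one]
  refine ⟨fun g => (ρ g (0, 1)).1, fun g v => ?_⟩
  rw [coords g v, show (ρ g (0, 1)).2 = 1 from hd g, mul_one]

def AddEquiv.conjEnd {A V : Type*} [AddMonoid A] [AddMonoid V] (e : A ≃+ V) :
    AddMonoid.End A →* AddMonoid.End V where
  toFun f := e.toAddMonoidHom.comp (f.comp e.symm.toAddMonoidHom)
  map_one' := by ext v; exact e.apply_symm_apply v
  map_mul' f g := by
    ext v
    show e (f (g (e.symm v))) = e (f (e.symm (e (g (e.symm v)))))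
    rw [e.symm_apply_apply]

theorem AddEquiv.conjEnd_apply {A V : Type*} [AddMonoid A] [AddMonoid V] (e : A ≃+ V)
    (f : AddMonoid.End A) (v : V) : e.conjEnd f v = e (f (e.symm v)) := rfl

theorem exists_linearEquiv_apply_eq_one_zero {K : Type*} [Field K] {u : K × K} (hu : u ≠ 0) :
    ∃ g : (K × K) ≃ₗ[K] K × K, g u = (1, 0) := by
  obtain ⟨v, hv⟩ := exists_linearIndependent_pair_of_one_lt_finrank (R := K) (by simp) hu
  let b := basisOfLinearIndependentOfCardEqFinrank hv (by simp)
  refine ⟨b.equivFun.trans (LinearEquiv.finTwoArrow K K), ?_⟩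
  have hb : b 0 = u := by simp [b]
  rw [← hb, LinearEquiv.trans_apply]
  simp [LinearEquiv.finTwoArrow]

theorem Nat.card_eq_sq_of_equiv_zmod_prod {n : ℕ} {A : Type*} (φ : A ≃ ZMod n × ZMod n) :
    Nat.card A = n ^ 2 := by
  rw [Nat.card_congr φ, Nat.card_prod, Nat.card_zmod, sq]

theorem exists_addEquiv_mul_eq_add_or_of_mul_eq {K B : Type*} [Field K] [Add B] [Mul B]
    (e : B ≃+ K × K) (μ : K)
    (he : ∀ a b, e (a * b) = ((e a).1 + (e b).1 + μ * (e a).2 * (e b).2, (e a).2 + (e b).2)) :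
    (∃ e : B ≃+ K × K, ∀ x y, e (x * y) = e x + e y) ∨
      ∃ e : B ≃+ K × K, ∀ x y,
        e (x * y) = ((e x).1 + (e y).1 + (e x).2 * (e y).2, (e x).2 + (e y).2) := by
  rcases eq_or_ne μ 0 with rfl | hμ
  · exact .inl ⟨e, fun x y => by rw [he]; ext <;> simp⟩
  · let s : K × K ≃+ K × K :=
      (LinearEquiv.smulOfNeZero K K μ⁻¹ (inv_ne_zero hμ)).toAddEquiv.prodCongr (AddEquiv.refl K)
    have hs : ∀ v, s v = (μ⁻¹ * v.1, v.2) := fun _ => rfl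
    refine .inr ⟨e.trans s, fun x y => ?_⟩
    simp only [AddEquiv.trans_apply, hs, he, Prod.mk.injEq, and_true]
    field_simp

theorem not_exists_addEquiv_map_add_eq {K A : Type*} [CommRing K] [Nontrivial K] [Add A] :
    ¬∃ f : A ≃+ K × K, ∀ x y,
      f (x + y) = ((f x).1 + (f y).1 + (f x).2 * (f y).2, (f x).2 + (f y).2) := by
  rintro ⟨f, hf⟩
  have h := congrArg Prod.fst (hf (f.symm (0, 1)) (f.symm (0, 1)))
  rw [map_add, f.apply_symm_apply] at h
  simp at h

namespace LeftBrace

variable {B : Type*} [LeftBrace B]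

theorem mul_add_eq (a b c : B) : a * (b + c) = a * b + a * c - a :=
  eq_sub_of_add_eq (left_brace a b c)

theorem mul_zero_eq_self (a : B) : a * 0 = a := by
  simpa using (left_brace a 0 0).symm

theorem one_eq_zero : (1 : B) = 0 := by
  rw [← mul_zero_eq_self (1 : B), one_mul]

theorem mul_neg_eq (a b : B) : a * -b = a + a - a * b := by
  have h := left_brace a b (-b)
  rw [add_neg_cancel, mul_zero_eq_self] at h
  rw [h]; abel

def lambda : B →* AddMonoid.End B where
  toFun a :=
    { toFun b := -a + a * b
      map_zero' := by rw [mul_zero_eq_self, neg_add_cancel]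
      map_add' b c := by rw [mul_add_eq]; abel }
  map_one' := by
    ext b
    show -1 + 1 * b = b
    rw [one_mul, one_eq_zero, neg_zero, zero_add]
  map_mul' a b := by
    ext c
    show -(a * b) + a * b * c = -a + a * (-b + b * c)
    rw [mul_add_eq, mul_neg_eq, mul_assoc]
    abel

theorem mul_eq_add_lambda (a b : B) : a * b = a + lambda a b :=
  (add_neg_cancel_left a (a * b)).symm

variable {p : ℕ} [Fact p.Prime]

theorem exists_addEquiv_lambda_eq (φ : B ≃+ ZMod p × ZMod p) :
    ∃ (e : B ≃+ ZMod p × ZMod p) (c : B → ZMod p), ∀ a b,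
      e (lambda a b) = ((e b).1 + (e b).2 * c a, (e b).2) := by
  have hcard := Nat.card_eq_sq_of_equiv_zmod_prod φ.toEquiv
  have hB : IsPGroup p B := IsPGroup.of_card hcard
  have : Finite B := Finite.of_equiv _ φ.symm.toEquiv
  obtain ⟨w, hw0, hw⟩ :=
    hB.exists_ne_zero_forall_apply_eq (hcard ▸ dvd_pow_self p two_ne_zero) lambda
  obtain ⟨g, hg⟩ := exists_linearEquiv_apply_eq_one_zero ((map_ne_zero_iff φ φ.injective).mpr hw0)
  let e := φ.trans g.toAddEquiv
  have he : e w = (1, 0) := hg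
  obtain ⟨c, hc⟩ := hB.exists_forall_apply_eq_add_mul_snd (e.conjEnd.comp lambda) fun a => by
    rw [MonoidHom.comp_apply, AddEquiv.conjEnd_apply, ← he, e.symm_apply_apply, hw]
  exact ⟨e, c, fun a b => by simpa [AddEquiv.conjEnd_apply] using hc a (e b)⟩

theorem exists_addEquiv_mul_eq (φ : B ≃+ ZMod p × ZMod p) :
    ∃ (e : B ≃+ ZMod p × ZMod p) (μ : ZMod p), ∀ a b,
      e (a * b) = ((e a).1 + (e b).1 + μ * (e a).2 * (e b).2, (e a).2 + (e b).2) := by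
  obtain ⟨e, c, hc⟩ := exists_addEquiv_lambda_eq φ
  have hmul : ∀ a b, e (a * b) = ((e a).1 + (e b).1 + (e b).2 * c a, (e a).2 + (e b).2) := by
    intro a b
    rw [mul_eq_add_lambda, map_add, hc]
    ext <;> simp [add_assoc]
  have hcomm := (IsPGroup.isMulCommutative_of_card_eq_prime_sq
    (Nat.card_eq_sq_of_equiv_zmod_prod φ.toEquiv)).is_comm.comm
  let u := e.symm (0, 1)
  have hc_eq : ∀ a, c a = (e a).2 * c u := by
    intro a
    have h := congrArg (fun x => (e x).1) (hcomm a u)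
    simp only [hmul, u, e.apply_symm_apply] at h
    linear_combination h
  refine ⟨e, c u, fun a b => ?_⟩
  rw [hmul, hc_eq a]
  congr 1
  ring

end LeftBrace

/-- Every left brace with additive group isomorphic to `Z/(p) × Z/(p)` is isomorphic to
exactly one of: (i) the trivial brace; (ii) the brace with multiplication
`(x₁,y₁)·(x₂,y₂) = (x₁+x₂+y₁y₂, y₁+y₂)`; moreover these two braces are not isomorphic. -/
theorem braces_of_order_p_squared_elementary (p : ℕ) (hp : p.Prime) :
    (∀ (B : Type*) [LeftBrace B], (B ≃+ ZMod p × ZMod p) →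
      (∃ e : B ≃+ ZMod p × ZMod p, ∀ x y : B, e (x * y) = e x + e y) ∨
      (∃ e : B ≃+ ZMod p × ZMod p, ∀ x y : B,
        e (x * y) = ((e x).1 + (e y).1 + (e x).2 * (e y).2, (e x).2 + (e y).2))) ∧
    ¬∃ f : (ZMod p × ZMod p) ≃+ ZMod p × ZMod p, ∀ x y : ZMod p × ZMod p,
      f (x + y) = ((f x).1 + (f y).1 + (f x).2 * (f y).2, (f x).2 + (f y).2) := by
  have := Fact.mk hp
  refine ⟨fun B _ φ => ?_, not_exists_addEquiv_map_add_eq⟩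
  obtain ⟨e, μ, he⟩ := LeftBrace.exists_addEquiv_mul_eq φ
  exact exists_addEquiv_mul_eq_add_or_of_mul_eq e μ he
end

section
/- Let p be a prime and let B be the left brace on Z/(p) × Z/(p) with componentwise addition and multiplication (x₁,y₁)·(x₂,y₂) = (x₁+x₂+y₁y₂, y₁+y₂). Then the multiplicative group (B,·) is cyclic of order 4 if p = 2, and is isomorphic to Z/(p) × Z/(p) if p ≠ 2. -/
/-- For the left brace on `Z/(p) × Z/(p)` with multiplication
`(x₁,y₁)·(x₂,y₂) = (x₁+x₂+y₁y₂, y₁+y₂)`, the multiplicative group is cyclic of order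
`4` when `p = 2`, and isomorphic to `Z/(p) × Z/(p)` when `p ≠ 2`. -/
theorem multiplicative_group_of_nontrivial_brace_p_times_p (p : ℕ) (hp : p.Prime) :
    (p = 2 → ∃ e : (ZMod p × ZMod p) ≃ ZMod 4, ∀ a b : ZMod p × ZMod p,
      e (a.1 + b.1 + a.2 * b.2, a.2 + b.2) = e a + e b) ∧
    (p ≠ 2 → ∃ e : (ZMod p × ZMod p) ≃ (ZMod p × ZMod p), ∀ a b : ZMod p × ZMod p,
      e (a.1 + b.1 + a.2 * b.2, a.2 + b.2) = e a + e b) := by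
  constructor
  · intro h
    subst h
    refine ⟨⟨fun a => (2 * a.1.val + a.2.val : ℕ),
      fun n => ((n.val / 2 : ℕ), (n.val % 2 : ℕ)), by decide, by decide⟩, by decide⟩
  · intro h
    haveI : Fact p.Prime := ⟨hp⟩
    have h2 : (2 : ZMod p) ≠ 0 := by
      intro h0
      have : ((2 : ℕ) : ZMod p) = 0 := by push_cast; exact h0
      have := (ZMod.natCast_eq_zero_iff 2 p).mp this
      exact h ((Nat.prime_dvd_prime_iff_eq hp Nat.prime_two).mp this)
    set c : ZMod p := (2 : ZMod p)⁻¹ with hc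
    have h2c : 2 * c = 1 := by
      rw [hc]; field_simp
    refine ⟨⟨fun a => (a.1 - c * a.2 ^ 2, a.2), fun a => (a.1 + c * a.2 ^ 2, a.2),
      fun a => by simp, fun a => by simp⟩, ?_⟩
    intro a b
    simp only [Equiv.coe_fn_mk, Prod.mk.injEq, Prod.mk_add_mk]
    exact ⟨by linear_combination (-(a.2 * b.2)) * h2c, trivial⟩
end

section
/- Let p be a prime. There is no left brace B whose additive group is isomorphic to Z/(p) × Z/(p) and whose socle is trivial, i.e. Soc(B) = {0}. -/
section Aux

variable {B : Type*} [LeftBrace B]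

lemma lb_mul_zero (a : B) : a * 0 = a := by
  have h := LeftBrace.left_brace a 0 0
  rw [add_zero] at h
  exact (add_left_cancel h).symm

lemma lb_one_eq_zero : (1 : B) = 0 :=
  (lb_mul_zero (1 : B)).symm.trans (one_mul 0)

/-- The lambda map of a left brace, as an additive homomorphism. -/
def lbLam (a : B) : B →+ B :=
  AddMonoidHom.mk' (fun b => a * b - a) (by
    intro x y
    have h := LeftBrace.left_brace a x y
    have h2 : a * (x + y) = a * x + a * y - a := by
      rw [eq_sub_iff_add_eq]; exact h
    simp only [h2]; abel)

lemma lbLam_apply (a b : B) : lbLam a b = a * b - a := rfl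

lemma lbLam_mul (a b : B) (c : B) : lbLam (a * b) c = lbLam a (lbLam b c) := by
  have h := map_add (lbLam a) (b * c - b) b
  rw [sub_add_cancel] at h
  simp only [lbLam_apply] at h ⊢
  have h3 : a * (b * c - b) - a = a * (b * c) - a - (a * b - a) := by
    rw [h]; abel
  rw [mul_assoc, h3]; abel

lemma lbLam_one (b : B) : lbLam (1 : B) b = b := by
  rw [lbLam_apply, one_mul, lb_one_eq_zero, sub_zero]

lemma lbLam_inv_cancel (a b : B) : lbLam a⁻¹ (lbLam a b) = b := by
  rw [← lbLam_mul, inv_mul_cancel, lbLam_one]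

/-- Type synonym of a left brace on which the multiplicative group acts via lambda. -/
def LBAct (B : Type*) := B

instance : MulAction B (LBAct B) where
  smul a b := lbLam (B := B) a b
  one_smul b := lbLam_one (B := B) b
  mul_smul a b c := lbLam_mul (B := B) a b c

end Aux

/-- There is no left brace with additive group isomorphic to `Z/(p) × Z/(p)` whose socle
`{a | λ_a = id}` is trivial. -/
theorem no_trivial_socle_brace_p_times_p (p : ℕ) (hp : p.Prime) :
    ∀ (B : Type*) [LeftBrace B], (B ≃+ ZMod p × ZMod p) →
      ¬({a : B | ∀ b : B, a * b - a = b} = {0}) := by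
  intro B _ e h
  haveI : Fact p.Prime := ⟨hp⟩
  haveI : Finite B := Finite.of_equiv _ e.symm.toEquiv
  have cardB : Nat.card B = p ^ 2 := by
    rw [Nat.card_congr e.toEquiv, Nat.card_prod, Nat.card_zmod, sq]
  have hpB : IsPGroup p B := IsPGroup.of_card cardB
  -- the fixed "points" subgroup
  let Fix : AddSubgroup B :=
  { carrier := {c : B | ∀ a : B, a * c - a = c}
    zero_mem' := fun a => by rw [lb_mul_zero, sub_self]
    add_mem' := by
      intro c d hc hd a
      have : lbLam a (c + d) = c + d := by
        rw [map_add, show lbLam a c = c from hc a, show lbLam a d = d from hd a]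
      exact this
    neg_mem' := by
      intro c hc a
      have : lbLam a (-c) = -c := by
        rw [map_neg, show lbLam a c = c from hc a]
      exact this }
  have hFixMem : ∀ c : B, c ∈ Fix ↔ ∀ a : B, a * c - a = c := fun _ => Iff.rfl
  -- the socle is trivial: membership consequence
  have hsoc : ∀ g : B, (∀ b : B, g * b - g = b) → g = 1 := by
    intro g hg
    have : g ∈ ({0} : Set B) := h ▸ hg
    rw [Set.mem_singleton_iff] at this
    rw [this, lb_one_eq_zero]
  -- p divides the cardinality of Fix
  haveI : Finite (LBAct B) := ‹Finite B›
  have hmod := hpB.card_modEq_card_fixedPoints (LBAct B)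
  have hcardLB : Nat.card (LBAct B) = p ^ 2 := cardB
  have hFixEquiv : MulAction.fixedPoints B (LBAct B) ≃ Fix :=
    { toFun := fun x => ⟨(x.1 : B), fun a => x.2 a⟩
      invFun := fun x => ⟨(x.1 : B), fun a => x.2 a⟩
      left_inv := fun x => rfl
      right_inv := fun x => rfl }
  have hdvdFix : p ∣ Nat.card Fix := by
    have h1 : Nat.card (MulAction.fixedPoints B (LBAct B)) ≡ 0 [MOD p] := by
      refine Nat.ModEq.trans hmod.symm ?_
      rw [hcardLB]
      exact (Nat.modEq_zero_iff_dvd).mpr ⟨p, sq p⟩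
    rw [Nat.card_congr hFixEquiv] at h1
    exact (Nat.modEq_zero_iff_dvd).mp h1
  have hFixpos : 0 < Nat.card Fix := Nat.card_pos_iff.mpr ⟨⟨0, Fix.zero_mem⟩, inferInstance⟩
  have hFixge : p ≤ Nat.card Fix := Nat.le_of_dvd hFixpos hdvdFix
  -- case split: is Fix everything?
  by_cases hFixTop : ∀ b : B, b ∈ Fix
  · -- then every element is in the socle; find a nonzero one
    have h2 : 1 < Nat.card B := by
      rw [cardB]
      calc 1 < p := hp.one_lt
        _ ≤ p ^ 2 := Nat.le_self_pow (by norm_num) p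
    haveI : Nontrivial B := Finite.one_lt_card_iff_nontrivial.mp h2
    obtain ⟨a, ha⟩ := exists_ne (0 : B)
    have ha1 : a = 1 := hsoc a (fun b => (hFixTop b) a)
    exact ha (ha1.trans lb_one_eq_zero)
  · push_neg at hFixTop
    obtain ⟨b₀, hb₀⟩ := hFixTop
    -- the subgroup generated by Fix and b₀ is everything
    set H : AddSubgroup B := Fix ⊔ AddSubgroup.zmultiples b₀ with hH
    have hFixleH : Fix ≤ H := le_sup_left
    have hb₀H : b₀ ∈ H := AddSubgroup.mem_sup_right (AddSubgroup.mem_zmultiples b₀)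
    have hHcard_dvd : Nat.card H ∣ p ^ 2 := cardB ▸ AddSubgroup.card_addSubgroup_dvd_card H
    have hHgt : ¬ Nat.card H ≤ p := by
      intro hle
      have hsub : (Fix : Set B) ⊆ (H : Set B) := hFixleH
      have hcard : (H : Set B).ncard ≤ (Fix : Set B).ncard := by
        rw [← Nat.card_coe_set_eq, ← Nat.card_coe_set_eq]
        exact hle.trans hFixge
      have heq := Set.eq_of_subset_of_ncard_le hsub hcard (Set.toFinite _)
      refine hb₀ ?_
      rw [← SetLike.mem_coe, heq]
      exact hb₀H
    have hHcard : Nat.card H = p ^ 2 := by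
      obtain ⟨k, hk, hkeq⟩ := (Nat.dvd_prime_pow hp).mp hHcard_dvd
      have hk2 : k = 2 := by
        by_contra hne
        have hk1 : k ≤ 1 := by omega
        refine hHgt ?_
        rw [hkeq]
        calc p ^ k ≤ p ^ 1 := Nat.pow_le_pow_right hp.pos hk1
          _ = p := pow_one p
      rw [hkeq, hk2]
    have hHtop : H = ⊤ := AddSubgroup.eq_top_of_card_eq H (hHcard.trans cardB.symm)
    -- decomposition of elements
    have decomp : ∀ b : B, ∃ c ∈ Fix, ∃ n : ℤ, c + n • b₀ = b := by
      intro b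
      have hb : b ∈ H := hHtop ▸ AddSubgroup.mem_top b
      rw [hH, AddSubgroup.mem_sup] at hb
      obtain ⟨y, hy, z, hz, hyz⟩ := hb
      obtain ⟨n, hn⟩ := AddSubgroup.mem_zmultiples_iff.mp hz
      exact ⟨y, hy, n, by rw [hn, hyz]⟩
    -- key: an element fixing b₀ and Fix pointwise is the identity
    have key : ∀ g : B, g * b₀ - g = b₀ → g = 1 := by
      intro g hg
      refine hsoc g ?_
      intro b
      obtain ⟨c, hc, n, rfl⟩ := decomp b
      have : lbLam g (c + n • b₀) = c + n • b₀ := by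
        rw [map_add, map_zsmul, show lbLam g c = c from hc g,
          show lbLam g b₀ = b₀ from hg]
      exact this
    -- the map a ↦ a * b₀ - a is injective and avoids Fix (in particular 0)
    have hnotmem : ∀ a : B, a * b₀ - a ∉ Fix := by
      intro a hmem
      have h1 : lbLam a (a * b₀ - a) = a * b₀ - a := hmem a
      have h2 : b₀ = a * b₀ - a := by
        have := lbLam_inv_cancel a b₀
        rw [show lbLam a b₀ = a * b₀ - a from rfl, ← h1, lbLam_inv_cancel] at this
        exact this.symm
      exact hb₀ (h2 ▸ hmem)
    have hinj : Function.Injective (fun a : B => a * b₀ - a) := by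
      intro a a' heq
      simp only at heq
      have h1 : lbLam (a'⁻¹ * a) b₀ = b₀ := by
        rw [lbLam_mul, show lbLam a b₀ = a * b₀ - a from rfl, heq,
          show (a' * b₀ - a' : B) = lbLam a' b₀ from rfl, lbLam_inv_cancel]
      have h2 := key (a'⁻¹ * a) h1
      exact (inv_mul_eq_one.mp h2).symm
    haveI : Fintype B := Fintype.ofFinite B
    have hlt : Fintype.card B < Fintype.card B := by
      refine Fintype.card_lt_of_injective_of_notMem _ hinj (b := 0) ?_
      rintro ⟨a, ha⟩
      simp only at ha
      refine hnotmem a ?_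
      rw [ha]
      exact Fix.zero_mem
    exact lt_irrefl _ hlt
end

section
/- Let p be an odd prime. There is no left brace B whose additive group is isomorphic to (Z/(p))³ and whose socle is trivial, i.e. Soc(B) = {0}. -/
namespace LB
variable {B : Type*} [LeftBrace B]

def lam (a b : B) : B := a * b - a

lemma mul_add'' (a b c : B) : a*(b+c) = a*b + a*c - a := by
  have := LeftBrace.left_brace a b c
  linear_combination (norm := abel_nf) this

lemma mul_zero' (a : B) : a * 0 = a := by
  have := LeftBrace.left_brace a 0 0
  simpa using this.symm

lemma one_eq_zero : (1 : B) = 0 := by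
  have h1 : (1 : B) * 0 = 0 := one_mul 0
  rw [mul_zero'] at h1; exact h1

lemma lam_add (a b c : B) : lam a (b+c) = lam a b + lam a c := by
  unfold lam; rw [mul_add'']; abel

lemma mul_neg' (a b : B) : a * (-b) = a + a - a * b := by
  have h := mul_add'' a b (-b)
  rw [add_neg_cancel, mul_zero'] at h
  linear_combination (norm := abel_nf) -h

lemma lam_mul (a b c : B) : lam (a*b) c = lam a (lam b c) := by
  unfold lam
  have h : a * (b * c - b) = a * (b*c) + a * (-b) - a := by
    have := mul_add'' a (b*c) (-b)
    rw [← sub_eq_add_neg] at this; exact this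
  rw [h, mul_neg', ← mul_assoc]
  abel

lemma lam_one (b : B) : lam 1 b = b := by unfold lam; rw [one_mul, one_eq_zero, sub_zero]

lemma lam_zero (a : B) : lam a 0 = 0 := by unfold lam; rw [mul_zero', sub_self]

lemma lam_inv_lam (a c : B) : lam a⁻¹ (lam a c) = c := by
  rw [← lam_mul, inv_mul_cancel, lam_one]

lemma mul_eq (a b : B) : a * b = a + lam a b := by unfold lam; abel

end LB

section Helpers
variable {p : ℕ} [Fact p.Prime]

lemma pdvd_card (M : Type*) [AddCommGroup M] [Module (ZMod p) M] [Finite M] [Nontrivial M] :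
    p ∣ Nat.card M := by
  have : Fintype M := Fintype.ofFinite M
  have hfin : Module.Finite (ZMod p) M := Module.Finite.of_finite
  have hcard : Fintype.card M = (Fintype.card (ZMod p)) ^ Module.finrank (ZMod p) M :=
    Module.card_eq_pow_finrank
  have hpos : 0 < Module.finrank (ZMod p) M := Module.finrank_pos
  rw [Nat.card_eq_fintype_card, hcard, ZMod.card]
  exact dvd_pow_self p hpos.ne'

omit [Fact p.Prime] in
lemma exists_fixed_vector {G M : Type*} [Group G] [AddCommGroup M]
    (hG : IsPGroup p G) [Finite M] (hM : p ∣ Nat.card M) [Fact p.Prime]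
    (ρ : G → M → M) (h1 : ∀ x, ρ 1 x = x) (hmul : ∀ g h x, ρ (g*h) x = ρ g (ρ h x))
    (h0 : ∀ g, ρ g 0 = 0) :
    ∃ m : M, m ≠ 0 ∧ ∀ g, ρ g m = m := by
  classical
  have hinj : ∀ g : G, Function.Injective (ρ g) := by
    intro g u v huv
    have : ρ g⁻¹ (ρ g u) = ρ g⁻¹ (ρ g v) := by rw [huv]
    rwa [← hmul, ← hmul, inv_mul_cancel, h1, h1] at this
  letI : SMul G {m : M // m ≠ 0} :=
    ⟨fun g m => ⟨ρ g m.1, fun h => m.2 (hinj g (h.trans (h0 g).symm))⟩⟩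
  letI : MulAction G {m : M // m ≠ 0} :=
    { one_smul := fun m => Subtype.ext (h1 m.1)
      mul_smul := fun g h m => Subtype.ext (hmul g h m.1) }
  have hFM : Fintype M := Fintype.ofFinite M
  have hcard : Nat.card {m : M // m ≠ 0} = Nat.card M - 1 := by
    rw [Nat.card_eq_fintype_card, Nat.card_eq_fintype_card]
    have := Fintype.card_subtype_compl (fun m : M => m = 0)
    simpa [Fintype.card_subtype_eq (0 : M)] using this
  have hnd : ¬ p ∣ Nat.card {m : M // m ≠ 0} := by
    rw [hcard]
    intro hdvd
    have h1le : 1 ≤ Nat.card M := Nat.card_pos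
    have hd1 : p ∣ Nat.card M - (Nat.card M - 1) := Nat.dvd_sub hM hdvd
    rw [Nat.sub_sub_self h1le] at hd1
    have hp1 : p = 1 := Nat.eq_one_of_dvd_one hd1
    exact (Nat.Prime.one_lt (Fact.out (p := p.Prime))).ne' hp1
  obtain ⟨m, hm⟩ := hG.nonempty_fixed_point_of_prime_not_dvd_card _ hnd
  exact ⟨m.1, m.2, fun g => congrArg Subtype.val (hm g)⟩

end Helpers

theorem brace_aux (p : ℕ) [Fact p.Prime] [NeZero p] (hodd : p ≠ 2)
    (B : Type*) [LeftBrace B] [Module (ZMod p) B]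
    (e : B ≃+ ZMod p × ZMod p × ZMod p)
    (hsoc' : ∀ a : B, (∀ b : B, LB.lam a b = b) → a = 0) : False := by
  classical
  have hp : p.Prime := Fact.out
  haveI : Finite B := Finite.of_equiv _ e.symm.toEquiv
  have hcardB : Nat.card B = p ^ 3 := by
    rw [Nat.card_congr e.toEquiv, Nat.card_prod, Nat.card_prod, Nat.card_zmod]
    ring
  have hPB : IsPGroup p B := IsPGroup.of_card hcardB
  -- lam as additive/linear maps
  let lamH : B → (B →+ B) := fun a => AddMonoidHom.mk' (LB.lam a) (LB.lam_add a)
  have lam_smul : ∀ (a : B) (s : ZMod p) (u : B), LB.lam a (s • u) = s • LB.lam a u :=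
    fun a s u => ZMod.map_smul (lamH a) s u
  let lamL : B → (B →ₗ[ZMod p] B) := fun a => (lamH a).toZModLinearMap p
  have lamL_apply : ∀ (a u : B), lamL a u = LB.lam a u := fun a u => rfl
  -- Step 1: a nonzero vector fixed by all lam
  have hdvdB : p ∣ Nat.card B := by rw [hcardB]; exact dvd_pow_self p (by norm_num)
  obtain ⟨v1, hv1ne, hv1⟩ := exists_fixed_vector hPB hdvdB (fun g u => LB.lam g u)
    LB.lam_one LB.lam_mul LB.lam_zero
  -- S1 and quotient
  set S1 : Submodule (ZMod p) B := Submodule.span (ZMod p) {v1} with hS1def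
  have hv1S1 : v1 ∈ S1 := Submodule.mem_span_singleton_self v1
  have hS1inv : ∀ g : B, S1 ≤ S1.comap (lamL g) := by
    intro g u hu
    rw [Submodule.mem_comap]
    obtain ⟨s, hs⟩ := Submodule.mem_span_singleton.mp hu
    rw [lamL_apply, ← hs, lam_smul, hv1 g]
    exact Submodule.smul_mem _ _ hv1S1
  let Q1 := B ⧸ S1
  haveI : Finite Q1 := Quotient.finite _
  let ρ1 : B → Q1 → Q1 := fun g => Submodule.mapQ S1 S1 (lamL g) (hS1inv g)
  have hρ1mk : ∀ g u, ρ1 g (Submodule.Quotient.mk u) = Submodule.Quotient.mk (LB.lam g u) :=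
    fun g u => rfl
  have hplt : p < p ^ 3 := by
    calc p = p ^ 1 := (pow_one p).symm
    _ < p ^ 3 := Nat.pow_lt_pow_right hp.one_lt (by norm_num)
  have hexS1 : ∃ u : B, u ∉ S1 := by
    by_contra h
    push_neg at h
    have hsurj : Function.Surjective (fun s : ZMod p => s • v1) := by
      intro u
      obtain ⟨s, hs⟩ := Submodule.mem_span_singleton.mp (h u)
      exact ⟨s, hs⟩
    have := Nat.card_le_card_of_surjective _ hsurj
    rw [hcardB, Nat.card_zmod] at this
    omega
  obtain ⟨u1, hu1⟩ := hexS1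
  haveI : Nontrivial Q1 := ⟨⟨Submodule.Quotient.mk u1, 0, by
    rw [Ne, Submodule.Quotient.mk_eq_zero]; exact hu1⟩⟩
  obtain ⟨v2b, hv2bne, hv2b⟩ := exists_fixed_vector hPB (pdvd_card Q1) ρ1
    (by intro q; obtain ⟨u, rfl⟩ := Submodule.Quotient.mk_surjective S1 q
        rw [hρ1mk, LB.lam_one])
    (by intro g h q; obtain ⟨u, rfl⟩ := Submodule.Quotient.mk_surjective S1 q
        rw [hρ1mk, hρ1mk, hρ1mk, LB.lam_mul])
    (fun g => map_zero _)
  obtain ⟨v2, hv2eq⟩ := Submodule.Quotient.mk_surjective S1 v2b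
  have hv2mem : ∀ g, LB.lam g v2 - v2 ∈ S1 := by
    intro g
    rw [← Submodule.Quotient.eq S1, ← hρ1mk, hv2eq, hv2b g]
  have hv2n : v2 ∉ S1 := by
    intro h
    exact hv2bne (by rw [← hv2eq, Submodule.Quotient.mk_eq_zero]; exact h)
  have hxex : ∀ g, ∃ s : ZMod p, LB.lam g v2 = v2 + s • v1 := by
    intro g
    obtain ⟨s, hs⟩ := Submodule.mem_span_singleton.mp (hv2mem g)
    exact ⟨s, by rw [hs]; abel⟩
  choose x lamv2 using hxex
  -- S2 and quotient
  set S2 : Submodule (ZMod p) B := Submodule.span (ZMod p) {v1, v2} with hS2def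
  have hv1S2 : v1 ∈ S2 := Submodule.subset_span (Set.mem_insert _ _)
  have hv2S2 : v2 ∈ S2 := Submodule.subset_span (Set.mem_insert_of_mem _ rfl)
  have hS2inv : ∀ g : B, S2 ≤ S2.comap (lamL g) := by
    intro g u hu
    rw [Submodule.mem_comap]
    obtain ⟨s, t, hst⟩ := Submodule.mem_span_pair.mp hu
    rw [lamL_apply, ← hst, LB.lam_add, lam_smul, lam_smul, hv1 g, lamv2 g]
    exact Submodule.add_mem _ (Submodule.smul_mem _ _ hv1S2) (Submodule.smul_mem _ _
      (Submodule.add_mem _ hv2S2 (Submodule.smul_mem _ _ hv1S2)))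
  let Q2 := B ⧸ S2
  haveI : Finite Q2 := Quotient.finite _
  let ρ2 : B → Q2 → Q2 := fun g => Submodule.mapQ S2 S2 (lamL g) (hS2inv g)
  have hρ2mk : ∀ g u, ρ2 g (Submodule.Quotient.mk u) = Submodule.Quotient.mk (LB.lam g u) :=
    fun g u => rfl
  have hexS2 : ∃ u : B, u ∉ S2 := by
    by_contra h
    push_neg at h
    have hsurj : Function.Surjective (fun s : ZMod p × ZMod p => s.1 • v1 + s.2 • v2) := by
      intro u
      obtain ⟨s, t, hst⟩ := Submodule.mem_span_pair.mp (h u)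
      exact ⟨(s, t), hst⟩
    have := Nat.card_le_card_of_surjective _ hsurj
    rw [hcardB, Nat.card_prod, Nat.card_zmod] at this
    nlinarith [hp.two_le]
  obtain ⟨u2, hu2⟩ := hexS2
  haveI : Nontrivial Q2 := ⟨⟨Submodule.Quotient.mk u2, 0, by
    rw [Ne, Submodule.Quotient.mk_eq_zero]; exact hu2⟩⟩
  obtain ⟨v3b, hv3bne, hv3b⟩ := exists_fixed_vector hPB (pdvd_card Q2) ρ2
    (by intro q; obtain ⟨u, rfl⟩ := Submodule.Quotient.mk_surjective S2 q
        rw [hρ2mk, LB.lam_one])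
    (by intro g h q; obtain ⟨u, rfl⟩ := Submodule.Quotient.mk_surjective S2 q
        rw [hρ2mk, hρ2mk, hρ2mk, LB.lam_mul])
    (fun g => map_zero _)
  obtain ⟨v3, hv3eq⟩ := Submodule.Quotient.mk_surjective S2 v3b
  have hv3mem : ∀ g, LB.lam g v3 - v3 ∈ S2 := by
    intro g
    rw [← Submodule.Quotient.eq S2, ← hρ2mk, hv3eq, hv3b g]
  have hv3n : v3 ∉ S2 := by
    intro h
    exact hv3bne (by rw [← hv3eq, Submodule.Quotient.mk_eq_zero]; exact h)
  have hywex : ∀ g, ∃ a b : ZMod p, LB.lam g v3 = v3 + (a • v1 + b • v2) := by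
    intro g
    obtain ⟨a, b, hab⟩ := Submodule.mem_span_pair.mp (hv3mem g)
    exact ⟨a, b, by rw [hab]; abel⟩
  choose y w lamv3 using hywex
  -- independence
  have hsv1 : ∀ s : ZMod p, s • v1 = 0 → s = 0 := by
    intro s hs
    by_contra hne
    apply hv1ne
    calc v1 = s⁻¹ • (s • v1) := by rw [smul_smul, inv_mul_cancel₀ hne, one_smul]
    _ = 0 := by rw [hs, smul_zero]
  have huniq : ∀ α β γ : ZMod p, α • v1 + β • v2 + γ • v3 = 0 → α = 0 ∧ β = 0 ∧ γ = 0 := by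
    intro α β γ h
    have hγ : γ = 0 := by
      by_contra hne
      apply hv3bne
      have h2 : γ • v3b = 0 := by
        have hh := congrArg (Submodule.Quotient.mk (p := S2)) h
        rw [Submodule.Quotient.mk_add, Submodule.Quotient.mk_add,
          Submodule.Quotient.mk_smul, Submodule.Quotient.mk_smul, Submodule.Quotient.mk_smul,
          (Submodule.Quotient.mk_eq_zero S2).mpr hv1S2,
          (Submodule.Quotient.mk_eq_zero S2).mpr hv2S2, hv3eq] at hh
        simpa using hh
      calc v3b = γ⁻¹ • (γ • v3b) := by rw [smul_smul, inv_mul_cancel₀ hne, one_smul]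
      _ = 0 := by rw [h2, smul_zero]
    have hβ : β = 0 := by
      by_contra hne
      apply hv2bne
      have h2 : β • v2b = 0 := by
        have hh := congrArg (Submodule.Quotient.mk (p := S1)) h
        rw [Submodule.Quotient.mk_add, Submodule.Quotient.mk_add,
          Submodule.Quotient.mk_smul, Submodule.Quotient.mk_smul, Submodule.Quotient.mk_smul,
          (Submodule.Quotient.mk_eq_zero S1).mpr hv1S1, hγ, hv2eq] at hh
        simpa using hh
      calc v2b = β⁻¹ • (β • v2b) := by rw [smul_smul, inv_mul_cancel₀ hne, one_smul]
      _ = 0 := by rw [h2, smul_zero]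
    have hα : α = 0 := by
      rw [hβ, hγ] at h
      simp only [zero_smul, add_zero] at h
      exact hsv1 α h
    exact ⟨hα, hβ, hγ⟩
  -- spanning via cardinality
  have hΨbij : Function.Bijective (fun t : ZMod p × ZMod p × ZMod p =>
      t.1 • v1 + t.2.1 • v2 + t.2.2 • v3) := by
    rw [Nat.bijective_iff_injective_and_card]
    constructor
    · intro t t' h
      dsimp only at h
      have hdiff : (t.1 - t'.1) • v1 + (t.2.1 - t'.2.1) • v2 + (t.2.2 - t'.2.2) • v3 = 0 := by
        simp only [sub_smul]
        rw [show (t.1 • v1 - t'.1 • v1) + (t.2.1 • v2 - t'.2.1 • v2) + (t.2.2 • v3 - t'.2.2 • v3)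
          = (t.1 • v1 + t.2.1 • v2 + t.2.2 • v3) - (t'.1 • v1 + t'.2.1 • v2 + t'.2.2 • v3) by abel,
          h, sub_self]
      obtain ⟨h1, h2, h3⟩ := huniq _ _ _ hdiff
      exact Prod.ext (sub_eq_zero.mp h1) (Prod.ext (sub_eq_zero.mp h2) (sub_eq_zero.mp h3))
    · rw [hcardB, Nat.card_prod, Nat.card_prod, Nat.card_zmod]; ring
  have hspan : ∀ a : B, ∃ α β γ : ZMod p, a = α • v1 + β • v2 + γ • v3 := by
    intro a
    obtain ⟨t, ht⟩ := hΨbij.2 a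
    exact ⟨t.1, t.2.1, t.2.2, ht.symm⟩
  -- general formula for lam
  have hlam : ∀ (g : B) (α β γ : ZMod p), LB.lam g (α • v1 + β • v2 + γ • v3)
      = (α + β * x g + γ * y g) • v1 + (β + γ * w g) • v2 + γ • v3 := by
    intro g α β γ
    rw [LB.lam_add, LB.lam_add, lam_smul, lam_smul, lam_smul, hv1 g, lamv2 g, lamv3 g]
    module
  -- lam determines the element
  have hlameq : ∀ g h : B, (∀ b, LB.lam g b = LB.lam h b) → g = h := by
    intro g h H
    have hid : ∀ b, LB.lam (h⁻¹ * g) b = b := by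
      intro b
      rw [LB.lam_mul, H b, LB.lam_inv_lam]
    have h0 : h⁻¹ * g = 0 := hsoc' _ hid
    rw [← LB.one_eq_zero] at h0
    exact ((inv_mul_eq_one.mp h0)).symm
  have hxyw_inj : ∀ g h : B, x g = x h → y g = y h → w g = w h → g = h := by
    intro g h hx hy hw
    apply hlameq
    intro b
    obtain ⟨α, β, γ, rfl⟩ := hspan b
    rw [hlam, hlam, hx, hy, hw]
  have hΦbij2 : Function.Bijective (fun g : B => ((x g, y g, w g) : ZMod p × ZMod p × ZMod p)) := by
    rw [Nat.bijective_iff_injective_and_card]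
    constructor
    · intro g h hgh
      dsimp only at hgh
      exact hxyw_inj g h (congrArg Prod.fst hgh) (congrArg (fun t => t.2.1) hgh)
        (congrArg (fun t => t.2.2) hgh)
    · rw [hcardB, Nat.card_prod, Nat.card_prod, Nat.card_zmod]; ring
  -- special elements
  obtain ⟨z, hz⟩ := hΦbij2.2 ⟨0, 1, 0⟩
  dsimp only at hz
  have hxz : x z = 0 := congrArg Prod.fst hz
  have hyz : y z = 1 := congrArg (fun t => t.2.1) hz
  have hwz : w z = 0 := congrArg (fun t => t.2.2) hz
  obtain ⟨g0, hg0⟩ := hΦbij2.2 ⟨0, 0, 1⟩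
  dsimp only at hg0
  have hwg0 : w g0 = 1 := congrArg (fun t => t.2.2) hg0
  -- z is central
  have hcomm : ∀ g, z * g = g * z := by
    intro g
    apply hlameq
    intro b
    obtain ⟨α, β, γ, rfl⟩ := hspan b
    rw [LB.lam_mul, LB.lam_mul, hlam g, hlam z, hlam z, hlam g, hxz, hyz, hwz]
    module
  have hzcent : ∀ g, z + LB.lam z g = g + LB.lam g z := by
    intro g
    rw [← LB.mul_eq, ← LB.mul_eq, hcomm]
  obtain ⟨z1, z2, z3, hzdec⟩ := hspan z
  have key : ∀ (α β γ : ZMod p),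
      γ = z2 * x (α • v1 + β • v2 + γ • v3) + z3 * y (α • v1 + β • v2 + γ • v3) ∧
      z3 * w (α • v1 + β • v2 + γ • v3) = 0 := by
    intro α β γ
    set g := α • v1 + β • v2 + γ • v3 with hgdef
    have h := hzcent g
    rw [hgdef] at h
    rw [hlam z, hxz, hyz, hwz] at h
    nth_rewrite 2 [hzdec] at h
    rw [hlam g z1 z2 z3] at h
    rw [hzdec] at h
    have hdiff : (γ - (z2 * x g + z3 * y g)) • v1 + (-(z3 * w g)) • v2 + (0 : ZMod p) • v3
        = 0 := by
      calc (γ - (z2 * x g + z3 * y g)) • v1 + (-(z3 * w g)) • v2 + (0 : ZMod p) • v3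
          = ((z1 • v1 + z2 • v2 + z3 • v3) +
              ((α + β * 0 + γ * 1) • v1 + (β + γ * 0) • v2 + γ • v3)) -
            ((α • v1 + β • v2 + γ • v3) +
              ((z1 + z2 * x g + z3 * y g) • v1 + (z2 + z3 * w g) • v2 + z3 • v3)) := by
            module
      _ = 0 := by rw [h, sub_self]
    obtain ⟨h1, h2, _⟩ := huniq _ _ _ hdiff
    exact ⟨by linear_combination h1, by linear_combination -h2⟩
  -- z3 = 0 and the x formula
  have hz3 : z3 = 0 := by
    obtain ⟨α0, β0, γ0, hg0dec⟩ := hspan g0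
    have h2 := (key α0 β0 γ0).2
    rw [← hg0dec, hwg0, mul_one] at h2
    exact h2
  set k : ZMod p := x v3 with hkdef
  have hkinv : z2 * k = 1 := by
    have h1 := (key 0 0 1).1
    rw [hz3, zero_mul, add_zero] at h1
    have hv3dec : (0:ZMod p) • v1 + (0:ZMod p) • v2 + (1:ZMod p) • v3 = v3 := by module
    rw [hv3dec] at h1
    exact h1.symm
  have hkne : k ≠ 0 := by
    intro hk0
    rw [hk0, mul_zero] at hkinv
    exact zero_ne_one hkinv
  have hx : ∀ α β γ : ZMod p, x (α • v1 + β • v2 + γ • v3) = k * γ := by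
    intro α β γ
    have h1 := (key α β γ).1
    rw [hz3, zero_mul, add_zero] at h1
    linear_combination (-k) * h1 + (-(x (α • v1 + β • v2 + γ • v3))) * hkinv
  -- cocycle equations
  have cocx : ∀ g h : B, x (g * h) = x g + x h := by
    intro g h
    have e1 : LB.lam (g*h) v2 = v2 + x (g*h) • v1 := lamv2 _
    have e2 : LB.lam (g*h) v2 = v2 + (x g + x h) • v1 := by
      rw [LB.lam_mul, lamv2 h, LB.lam_add, lamv2 g, lam_smul, hv1]
      module
    have hdiff : (x (g*h) - (x g + x h)) • v1 = 0 := by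
      calc (x (g*h) - (x g + x h)) • v1
          = (v2 + x (g*h) • v1) - (v2 + (x g + x h) • v1) := by module
      _ = 0 := by rw [← e1, ← e2, sub_self]
    have := hsv1 _ hdiff
    linear_combination this
  have cocyw : ∀ g h : B, y (g*h) = y g + y h + x g * w h ∧ w (g*h) = w g + w h := by
    intro g h
    have e1 : LB.lam (g*h) v3 = v3 + (y (g*h) • v1 + w (g*h) • v2) := lamv3 _
    have e2 : LB.lam (g*h) v3
        = v3 + ((y g + y h + x g * w h) • v1 + (w g + w h) • v2) := by
      rw [LB.lam_mul, lamv3 h, LB.lam_add, LB.lam_add, lamv3 g, lam_smul, lam_smul, hv1, lamv2]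
      module
    have hdiff : (y (g*h) - (y g + y h + x g * w h)) • v1
        + (w (g*h) - (w g + w h)) • v2 + (0 : ZMod p) • v3 = 0 := by
      calc (y (g*h) - (y g + y h + x g * w h)) • v1
          + (w (g*h) - (w g + w h)) • v2 + (0 : ZMod p) • v3
          = (v3 + (y (g*h) • v1 + w (g*h) • v2))
            - (v3 + ((y g + y h + x g * w h) • v1 + (w g + w h) • v2)) := by module
      _ = 0 := by rw [← e1, ← e2, sub_self]
    obtain ⟨h1, h2, _⟩ := huniq _ _ _ hdiff
    exact ⟨by linear_combination h1, by linear_combination h2⟩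
  -- special values
  have hxv1 : x v1 = 0 := by
    have hd : (1 : ZMod p) • v1 + (0:ZMod p) • v2 + (0:ZMod p) • v3 = v1 := by module
    have := hx 1 0 0
    rw [hd, mul_zero] at this
    exact this
  have hxv2 : x v2 = 0 := by
    have hd : (0 : ZMod p) • v1 + (1:ZMod p) • v2 + (0:ZMod p) • v3 = v2 := by module
    have := hx 0 1 0
    rw [hd, mul_zero] at this
    exact this
  have hx0 : x (0 : B) = 0 := by
    have hd : (0 : ZMod p) • v1 + (0:ZMod p) • v2 + (0:ZMod p) • v3 = (0 : B) := by module
    have := hx 0 0 0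
    rw [hd, mul_zero] at this
    exact this
  have hlam0 : ∀ b : B, LB.lam 0 b = b := by
    intro b
    rw [← LB.one_eq_zero, LB.lam_one]
  have hyw0 : y (0:B) = 0 ∧ w (0:B) = 0 := by
    have e1 : LB.lam 0 v3 = v3 + (y 0 • v1 + w 0 • v2) := lamv3 _
    rw [hlam0] at e1
    have hdiff : (y (0:B)) • v1 + (w (0:B)) • v2 + (0 : ZMod p) • v3 = 0 := by
      calc (y (0:B)) • v1 + (w (0:B)) • v2 + (0 : ZMod p) • v3
          = (v3 + (y 0 • v1 + w 0 • v2)) - v3 := by module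
      _ = 0 := by rw [← e1, sub_self]
    obtain ⟨h1, h2, _⟩ := huniq _ _ _ hdiff
    exact ⟨h1, h2⟩
  -- iteration helper
  have hiter : ∀ (f : B → ZMod p) (gg u : B) (cst : ZMod p),
      (∀ s : ZMod p, f (u + s • gg + gg) = f (u + s • gg) + cst) →
      ∀ s : ZMod p, f (u + s • gg) = f u + s * cst := by
    intro f gg u cst hstep s
    have hnat : ∀ m : ℕ, f (u + (m : ZMod p) • gg) = f u + (m : ZMod p) * cst := by
      intro m
      induction m with
      | zero => simp
      | succ n ih =>
        rw [show ((n+1 : ℕ) : ZMod p) = (n : ZMod p) + 1 by push_cast; ring]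
        rw [add_smul, one_smul, ← add_assoc, hstep, ih]
        ring
    have hcast : ((s.val : ℕ) : ZMod p) = s := by rw [ZMod.natCast_val, ZMod.cast_id]
    calc f (u + s • gg) = f (u + ((s.val : ℕ) : ZMod p) • gg) := by rw [hcast]
    _ = f u + ((s.val : ℕ) : ZMod p) * cst := hnat s.val
    _ = f u + s * cst := by rw [hcast]
  -- abbreviations
  set c1 : ZMod p := w v1 with hc1def
  set c2 : ZMod p := w v2 with hc2def
  set d1 : ZMod p := y v1 with hd1def
  set d2 : ZMod p := y v2 with hd2def
  -- translation lemmas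
  have hmulv1 : ∀ u : B, u * v1 = u + v1 := by
    intro u; rw [LB.mul_eq, hv1]
  have stepw1 : ∀ u : B, w (u + v1) = w u + c1 := by
    intro u
    have := (cocyw u v1).2
    rwa [hmulv1] at this
  have L1w : ∀ (u : B) (s : ZMod p), w (u + s • v1) = w u + s * c1 := by
    intro u s
    exact hiter w v1 u c1 (fun s' => stepw1 _) s
  have hxline1 : ∀ (u : B) (s : ZMod p), x (u + s • v1) = x u := by
    intro u s
    obtain ⟨α, β, γ, rfl⟩ := hspan u
    have hd : α • v1 + β • v2 + γ • v3 + s • v1 = (α + s) • v1 + β • v2 + γ • v3 := by module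
    rw [hd, hx, hx]
  have stepy1 : ∀ u : B, y (u + v1) = y u + (d1 + x u * c1) := by
    intro u
    have := (cocyw u v1).1
    rw [hmulv1] at this
    linear_combination this
  have L1y : ∀ (u : B) (s : ZMod p), y (u + s • v1) = y u + s * (d1 + x u * c1) := by
    intro u s
    refine hiter y v1 u (d1 + x u * c1) (fun s' => ?_) s
    rw [stepy1 (u + s' • v1), hxline1 u s']
  have hxline2 : ∀ (u : B) (s : ZMod p), x (u + s • v2) = x u := by
    intro u s
    obtain ⟨α, β, γ, rfl⟩ := hspan u
    have hd : α • v1 + β • v2 + γ • v3 + s • v2 = α • v1 + (β + s) • v2 + γ • v3 := by module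
    rw [hd, hx, hx]
  have hmulv2 : ∀ u : B, u * v2 = (u + v2) + x u • v1 := by
    intro u; rw [LB.mul_eq, lamv2]; module
  have stepw2 : ∀ u : B, w (u + v2) = w u + (c2 - x u * c1) := by
    intro u
    have h := (cocyw u v2).2
    rw [hmulv2, L1w] at h
    linear_combination h
  have L2w : ∀ (u : B) (s : ZMod p), w (u + s • v2) = w u + s * (c2 - x u * c1) := by
    intro u s
    refine hiter w v2 u (c2 - x u * c1) (fun s' => ?_) s
    rw [stepw2 (u + s' • v2), hxline2 u s']
  have stepy2 : ∀ u : B, y (u + v2) = y u + (d2 + x u * c2 - x u * d1 - x u ^ 2 * c1) := by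
    intro u
    have h := (cocyw u v2).1
    rw [hmulv2, L1y] at h
    have hxx : x (u + v2) = x u := by
      have := hxline2 u 1
      rwa [one_smul] at this
    rw [hxx] at h
    linear_combination h
  have L2y : ∀ (u : B) (s : ZMod p),
      y (u + s • v2) = y u + s * (d2 + x u * c2 - x u * d1 - x u ^ 2 * c1) := by
    intro u s
    refine hiter y v2 u (d2 + x u * c2 - x u * d1 - x u ^ 2 * c1) (fun s' => ?_) s
    rw [stepy2 (u + s' • v2), hxline2 u s']
  -- the three key equations
  have hP1 : v1 * v3 = (v3 + c1 • v2) + (d1 + 1) • v1 := by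
    rw [LB.mul_eq, lamv3]; module
  have eqI' : c1 * c2 - k * c1 ^ 2 + d1 * c1 = 0 := by
    have h := (cocyw v1 v3).2
    rw [hP1, L1w, L2w, ← hkdef] at h
    linear_combination h
  have hP2 : v2 * v3 = (v3 + (c2 + 1) • v2) + d2 • v1 := by
    rw [LB.mul_eq, lamv3]; module
  have eqII' : (c2 + 1) * (c2 - k * c1) + d2 * c1 - c2 = 0 := by
    have h := (cocyw v2 v3).2
    rw [hP2, L1w, L2w, ← hkdef] at h
    linear_combination h
  have eqSS' : c1 * (d2 + k * c2 - k * d1 - k ^ 2 * c1) + (d1 + 1) * (d1 + k * c1) - d1 = 0 := by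
    have h := (cocyw v1 v3).1
    rw [hP1, L1y, hxline2, ← hkdef, L2y, ← hkdef, hxv1] at h
    linear_combination h
  -- injectivity on the plane
  have hDinj : ∀ α β : ZMod p, α * d1 + β * d2 = 0 → α * c1 + β * c2 = 0 → α = 0 ∧ β = 0 := by
    intro α β hy hw
    have hxa : x ((0:B) + β • v2 + α • v1) = 0 := by rw [hxline1, hxline2, hx0]
    have hwa : w ((0:B) + β • v2 + α • v1) = 0 := by
      rw [L1w, L2w, hyw0.2, hx0]
      linear_combination hw
    have hya : y ((0:B) + β • v2 + α • v1) = 0 := by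
      rw [L1y, hxline2, L2y, hyw0.1, hx0]
      linear_combination hy
    have ha0 : (0:B) + β • v2 + α • v1 = 0 := by
      apply hsoc'
      intro b
      obtain ⟨α', β', γ', rfl⟩ := hspan b
      rw [hlam, hxa, hya, hwa]
      module
    have hd : α • v1 + β • v2 + (0:ZMod p) • v3 = 0 := by
      have hre : α • v1 + β • v2 + (0:ZMod p) • v3 = (0:B) + β • v2 + α • v1 := by module
      rw [hre, ha0]
    obtain ⟨h1, h2, _⟩ := huniq _ _ _ hd
    exact ⟨h1, h2⟩
  -- endgame
  by_cases hc1 : c1 = 0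
  · have hc2 : c2 = 0 := by
      rw [hc1] at eqII'
      have : c2 * c2 = 0 := by linear_combination eqII'
      exact mul_self_eq_zero.mp this
    obtain ⟨hd2, hd1n⟩ := hDinj d2 (-d1) (by ring) (by rw [hc1, hc2]; ring)
    have hd1 : d1 = 0 := by linear_combination -hd1n
    obtain ⟨h10, _⟩ := hDinj 1 0 (by rw [hd1]; ring) (by rw [hc1]; ring)
    exact one_ne_zero h10
  · have hd1v : d1 = k * c1 - c2 := by
      have h : c1 * (c2 - k * c1 + d1) = 0 := by linear_combination eqI'
      rcases mul_eq_zero.mp h with h' | h'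
      · exact absurd h' hc1
      · linear_combination h'
    have h2k : (2 : ZMod p) * (k * c1) = 0 := by
      rw [hd1v] at eqSS'
      linear_combination eqSS' - eqII'
    have h2ne : (2 : ZMod p) ≠ 0 := by
      intro h
      have h' : ((2 : ℕ) : ZMod p) = 0 := by exact_mod_cast h
      have hdvd : p ∣ 2 := (ZMod.natCast_eq_zero_iff 2 p).mp h'
      exact hodd ((Nat.prime_dvd_prime_iff_eq hp Nat.prime_two).mp hdvd)
    rcases mul_eq_zero.mp h2k with h | h
    · exact h2ne h
    · rcases mul_eq_zero.mp h with h' | h'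
      · exact hkne h'
      · exact hc1 h'






/-- For odd primes `p`, there is no left brace with additive group isomorphic to
`(Z/(p))³` whose socle `{a | λ_a = id}` is trivial. -/
theorem no_trivial_socle_brace_p_cubed_elementary (p : ℕ) (hp : p.Prime) (hodd : p ≠ 2) :
    ∀ (B : Type*) [LeftBrace B], (B ≃+ ZMod p × ZMod p × ZMod p) →
      ¬({a : B | ∀ b : B, a * b - a = b} = {0}) := by
  intro B _ e hsoc
  haveI : Fact p.Prime := ⟨hp⟩
  haveI : NeZero p := ⟨hp.ne_zero⟩
  have hsoc' : ∀ a : B, (∀ b : B, LB.lam a b = b) → a = 0 := by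
    intro a ha
    have : a ∈ ({a : B | ∀ b : B, a * b - a = b}) := ha
    rw [hsoc] at this
    exact this
  have hps : ∀ x : B, p • x = 0 := by
    intro x
    apply e.injective
    rw [map_nsmul, map_zero]
    ext <;> simp [Prod.smul_def, ZMod.natCast_self, nsmul_eq_mul]
  letI : Module (ZMod p) B := AddCommGroup.zmodModule hps
  exact brace_aux p hodd B e hsoc'
end

section
/- On the abelian group (Z/(2))³ with componentwise addition, the multiplication (x₁,y₁,z₁)·(x₂,y₂,z₂) = (x₁+x₂+z₁y₂+x₁z₂+y₁z₂+x₁z₁z₂, y₁+y₂+z₁z₂+x₁z₂+y₁z₁z₂, z₁+z₂) defines a left brace whose socle is trivial (Soc = {0}) and whose multiplicative group is isomorphic to the dihedral group D₄ of order 8. -/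
/-- The multiplication `(x₁,y₁,z₁)·(x₂,y₂,z₂) =
(x₁+x₂+z₁y₂+x₁z₂+y₁z₂+x₁z₁z₂, y₁+y₂+z₁z₂+x₁z₂+y₁z₁z₂, z₁+z₂)` on `(Z/(2))³`. -/
def mulD4 (a b : ZMod 2 × ZMod 2 × ZMod 2) : ZMod 2 × ZMod 2 × ZMod 2 :=
  (a.1 + b.1 + a.2.2 * b.2.1 + a.1 * b.2.2 + a.2.1 * b.2.2 + a.1 * a.2.2 * b.2.2,
   a.2.1 + b.2.1 + a.2.2 * b.2.2 + a.1 * b.2.2 + a.2.1 * a.2.2 * b.2.2,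
   a.2.2 + b.2.2)

def toD4 (a : ZMod 2 × ZMod 2 × ZMod 2) : DihedralGroup 4 :=
  if a = (0,0,0) then .r 0
  else if a = (0,0,1) then .r 1
  else if a = (0,1,0) then .r 2
  else if a = (1,1,1) then .r 3
  else if a = (1,0,0) then .sr 0
  else if a = (0,1,1) then .sr 1
  else if a = (1,1,0) then .sr 2
  else .sr 3

def fromD4 : DihedralGroup 4 → ZMod 2 × ZMod 2 × ZMod 2
  | .r 0 => (0,0,0)
  | .r 1 => (0,0,1)
  | .r 2 => (0,1,0)
  | .r 3 => (1,1,1)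
  | .sr 0 => (1,0,0)
  | .sr 1 => (0,1,1)
  | .sr 2 => (1,1,0)
  | .sr 3 => (1,0,1)

/-- On `(Z/(2))³` with componentwise addition, `mulD4` defines a left brace whose socle
is trivial and whose multiplicative group is isomorphic to the dihedral group of order 8. -/
theorem brace_trivial_socle_Z2_cubed :
    (∀ a b c : ZMod 2 × ZMod 2 × ZMod 2, mulD4 (mulD4 a b) c = mulD4 a (mulD4 b c)) ∧
    (∀ a : ZMod 2 × ZMod 2 × ZMod 2, mulD4 0 a = a ∧ mulD4 a 0 = a) ∧
    (∀ a : ZMod 2 × ZMod 2 × ZMod 2, ∃ b, mulD4 a b = 0 ∧ mulD4 b a = 0) ∧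
    (∀ a b c : ZMod 2 × ZMod 2 × ZMod 2, mulD4 a (b + c) + a = mulD4 a b + mulD4 a c) ∧
    ({a : ZMod 2 × ZMod 2 × ZMod 2 | ∀ b, mulD4 a b - a = b} = {0}) ∧
    (∃ e : (ZMod 2 × ZMod 2 × ZMod 2) ≃ DihedralGroup 4,
      ∀ a b, e (mulD4 a b) = e a * e b) := by
  refine ⟨by decide, by decide, by decide, by decide, ?_, ?_⟩
  · ext a
    simp only [Set.mem_setOf_eq, Set.mem_singleton_iff]
    constructor
    · intro h
      revert h
      revert a
      decide
    · intro h
      subst h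
      decide
  · exact ⟨⟨toD4, fromD4, by decide, by decide⟩, by decide⟩
end

section
/- Let H be an abelian group, M a subgroup of Aut(H,+), and π : M → H a bijection satisfying π(f∘g) = π(f) + f(π(g)) for all f,g ∈ M. Then the operation x·y := x + π⁻¹(x)(y) makes H into a left brace (with the given addition) whose socle is trivial and whose multiplicative group (H,·) is isomorphic to M. -/
/-! The cocycle identity says exactly that `x + π⁻¹(x)(y) = π(π⁻¹ x ∘ π⁻¹ y)`, so the new
product is the group law of `M` transported to `H` along the bijection `π`; this gives the
group axioms and the isomorphism with `M`. Left distributivity holds because each `π⁻¹ x` is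
additive, and `x` lies in the socle iff `π⁻¹ x` is the identity, i.e. iff `x = π 0 = 0`. -/

namespace BijectiveCocycle

variable {H : Type*} [AddCommGroup H] {M : AddSubgroup (AddAut H)} (π : M ≃ H)

def mul (x y : H) : H := x + (π.symm x : AddAut H) y

theorem mul_add_add_self (a b c : H) : mul π a (b + c) + a = mul π a b + mul π a c := by
  simp only [mul, map_add]
  abel

variable {π} (hπ : ∀ f g : M, π (f + g) = π f + (f : AddAut H) (π g))
include hπ

theorem apply_zero : π 0 = 0 := by
  simpa using hπ 0 0

theorem symm_zero : π.symm 0 = 0 :=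
  π.symm_apply_eq.mpr (apply_zero hπ).symm

theorem mul_eq (x y : H) : mul π x y = π (π.symm x + π.symm y) := by
  rw [mul, hπ, π.apply_symm_apply, π.apply_symm_apply]

theorem symm_mul (x y : H) : π.symm (mul π x y) = π.symm x + π.symm y := by
  rw [mul_eq hπ, π.symm_apply_apply]

theorem mul_assoc (x y z : H) : mul π (mul π x y) z = mul π x (mul π y z) := by
  simp only [mul_eq hπ, π.symm_apply_apply, add_assoc]

theorem zero_mul (x : H) : mul π 0 x = x := by
  rw [mul_eq hπ, symm_zero hπ, zero_add, π.apply_symm_apply]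

theorem mul_zero (x : H) : mul π x 0 = x := by
  rw [mul_eq hπ, symm_zero hπ, add_zero, π.apply_symm_apply]

theorem exists_mul_eq_zero (x : H) : ∃ y, mul π x y = 0 ∧ mul π y x = 0 :=
  ⟨π (-π.symm x), by simp [mul_eq hπ, apply_zero hπ]⟩

theorem socle_eq : {x : H | ∀ y, mul π x y - x = y} = {0} := by
  ext x
  have h_socle : (∀ y, mul π x y - x = y) ↔ π.symm x = 0 := by
    simp only [mul, add_sub_cancel_left, Subtype.ext_iff, DFunLike.ext_iff,
      ZeroMemClass.coe_zero, AddAut.zero_apply]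
  rw [Set.mem_ofPred_eq, h_socle, π.symm_apply_eq, apply_zero hπ, Set.mem_singleton_iff]

end BijectiveCocycle

open BijectiveCocycle in
/-- Let `H` be an abelian group, `M` a subgroup of `Aut(H,+)`, and `π : M → H` a
bijection with `π(f∘g) = π(f) + f(π(g))`. Then `x·y := x + π⁻¹(x)(y)` makes `H` a left
brace with trivial socle whose multiplicative group is isomorphic to `M`. -/
theorem brace_from_bijective_cocycle (H : Type*) [AddCommGroup H]
    (M : AddSubgroup (AddAut H)) (π : M ≃ H)
    (hπ : ∀ f g : M, π (f + g) = π f + (f : AddAut H) (π g)) :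
    ∀ mul : H → H → H, (∀ x y : H, mul x y = x + (π.symm x : AddAut H) y) →
      (∀ x y z : H, mul (mul x y) z = mul x (mul y z)) ∧
      (∀ x : H, mul 0 x = x ∧ mul x 0 = x) ∧
      (∀ x : H, ∃ y : H, mul x y = 0 ∧ mul y x = 0) ∧
      (∀ a b c : H, mul a (b + c) + a = mul a b + mul a c) ∧
      ({x : H | ∀ y : H, mul x y - x = y} = {0}) ∧
      (∃ e : H ≃ M, ∀ x y : H, e (mul x y) = e x + e y) := by
  intro mul hmul
  obtain rfl : mul = BijectiveCocycle.mul π := funext₂ hmul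
  exact ⟨mul_assoc hπ, fun x => ⟨zero_mul hπ x, mul_zero hπ x⟩, exists_mul_eq_zero hπ,
    mul_add_add_self π, socle_eq hπ, π.symm, symm_mul hπ⟩
end
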